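/- Let G be the complete tripartite graph K_{4,4,4} with parts A, B, C each of size 4 (two vertices are adjacent if and only if they lie in different parts). Then in every 3-subcoloring μ of G, any two vertices belonging to two different parts receive different colors; equivalently, each of the three parts is monochromatic and the three parts receive three pairwise distinct colors. -/
import Mathlib


/-- A `k`-subcoloring of a simple graph `G`: every color class induces a
disjoint union of cliques. -/
def IsSubcoloring {V : Type*} {k : ℕ} (G : SimpleGraph V) (μ : V → Fin k) : Prop :=
  ∀ u v w : V, μ u = μ v → μ v = μ w → G.Adj u v → G.Adj v w → u ≠ w → G.Adj u w

/-- In any 3-subcoloring of the complete tripartite graph `K_{4,4,4}`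
(vertex `(i, x)` lies in part `i`; two vertices are adjacent iff they lie in
different parts), any two vertices of two different parts receive different
colors. -/
theorem K444_three_subcoloring_parts_monochromatic
    (G : SimpleGraph (Fin 3 × Fin 4))
    (hG : ∀ p q : Fin 3 × Fin 4, G.Adj p q ↔ p.1 ≠ q.1)
    (μ : Fin 3 × Fin 4 → Fin 3) (hμ : IsSubcoloring G μ) :
    ∀ p q : Fin 3 × Fin 4, p.1 ≠ q.1 → μ p ≠ μ q := by
  intro p q hpq heq
  set S : Fin 3 → Finset (Fin 3 × Fin 4) :=
    fun d => Finset.univ.filter (fun v => μ v = d) with hS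
  -- A color class containing two vertices from different parts has fst injective on it
  have hA : ∀ d : Fin 3, (∃ a b : Fin 3 × Fin 4, μ a = d ∧ μ b = d ∧ a.1 ≠ b.1) →
      (S d).card ≤ 3 := by
    intro d ⟨a, b, ha, hb, hab⟩
    have hinj : Set.InjOn (fun v => v.1) (S d : Set (Fin 3 × Fin 4)) := by
      intro u hu w hw hfst
      by_contra huw
      simp only [hS, Finset.coe_filter, Set.mem_setOf_eq] at hu hw
      -- pick x ∈ {a, b} with x.1 ≠ u.1
      obtain ⟨x, hx, hxu⟩ : ∃ x, μ x = d ∧ x.1 ≠ u.1 := by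
        by_cases h : a.1 = u.1
        · exact ⟨b, hb, fun hbu => hab (h.trans hbu.symm)⟩
        · exact ⟨a, ha, h⟩
      have h1 : G.Adj u x := (hG u x).mpr (fun h => hxu h.symm)
      have h2 : G.Adj x w := (hG x w).mpr (fun h => hxu (h.trans hfst.symm))
      have := hμ u x w (hu.2.trans hx.symm) (hx.trans hw.2.symm) h1 h2 huw
      exact ((hG u w).mp this) hfst
    calc (S d).card ≤ Fintype.card (Fin 3) := by
          have := Finset.card_le_card_of_injOn (fun v : Fin 3 × Fin 4 => v.1)
            (fun v _ => Finset.mem_univ v.1) hinj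
          simpa using this
      _ = 3 := by simp
  -- Every color class has at most 4 vertices
  have hB : ∀ d : Fin 3, (S d).card ≤ 4 := by
    intro d
    by_cases h : ∃ a b : Fin 3 × Fin 4, μ a = d ∧ μ b = d ∧ a.1 ≠ b.1
    · exact (hA d h).trans (by norm_num)
    · push_neg at h
      have hinj : Set.InjOn (fun v => v.2) (S d : Set (Fin 3 × Fin 4)) := by
        intro u hu w hw hsnd
        simp only [hS, Finset.coe_filter, Set.mem_setOf_eq] at hu hw
        exact Prod.ext (h u w hu.2 hw.2) hsnd
      calc (S d).card ≤ Fintype.card (Fin 4) := by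
            have := Finset.card_le_card_of_injOn (fun v : Fin 3 × Fin 4 => v.2)
              (fun v _ => Finset.mem_univ v.2) hinj
            simpa using this
        _ = 4 := by simp
  set c := μ p with hc
  have hcard : (S c).card ≤ 3 := hA c ⟨p, q, rfl, heq.symm, hpq⟩
  have hsum : (∑ d : Fin 3, (S d).card) = 12 := by
    rw [hS, ← Finset.card_eq_sum_card_fiberwise (fun v _ => Finset.mem_univ (μ v))]
    simp
  have hbound : (12 : ℕ) ≤ 11 := by
    have key : ∀ c' : Fin 3, (∑ d : Fin 3, (if d = c' then 3 else 4)) = 11 := by decide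
    calc (12 : ℕ) = ∑ d : Fin 3, (S d).card := hsum.symm
      _ ≤ ∑ d : Fin 3, (if d = c then 3 else 4) := by
          apply Finset.sum_le_sum
          intro d _
          split_ifs with hd
          · exact hd ▸ hcard
          · exact hB d
      _ = 11 := key c
  omega
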